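/- arXiv:1309.0597 — 2 statements merged into one kernel-verified Lean document; each statement's English description precedes it below -/
import Mathlib

section
/- Let k be a positive integer and let w_k(y) = ∫₀^y u_k(t) dt. Then for every j = 1,…,k−1 one has ∫_{y_j}^{y_{j+1}} w_k(t) dt = 0. Consequently the potential v_k (which satisfies v_k' = −w_k) takes the same value at all the jump points y₁,…,y_k of u_k, i.e. u_k satisfies the criticality condition v_k(y_i) = v_k(y_j) for all 1 ≤ i, j ≤ k. -/
open MeasureTheory intervalIntegral

/-! On the lamella `[y_j, y_{j+1}]` the primitive `w_k` is the linear function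
`(-1)^j (s - j/k)`, which vanishes at the midpoint `j/k`; its integral over the lamella is
therefore zero. Since `v_k' = -w_k`, the potential takes the same value at the two ends of
every interior lamella, hence at all jump points. -/

/-- The lamellar configuration `u_k`: equals `(-1)^j` on `(y_j, y_{j+1})` where
`y_j = (2j-1)/(2k)`, `y_0 = 0`, `y_{k+1} = 1`. -/
noncomputable def uk (k : ℕ) (t : ℝ) : ℝ := (-1 : ℝ) ^ ⌊(k : ℝ) * t + 1 / 2⌋

/-- `w_k(y) = ∫₀^y u_k(t) dt`. -/
noncomputable def wk (k : ℕ) (y : ℝ) : ℝ := ∫ t in (0 : ℝ)..y, uk k t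

lemma measurable_uk (k : ℕ) : Measurable (uk k) :=
  (Measurable.of_discrete (f := fun n : ℤ => (-1 : ℝ) ^ n)).comp
    ((measurable_id.const_mul _).add_const _).floor

lemma intervalIntegrable_uk (k : ℕ) (a b : ℝ) : IntervalIntegrable (uk k) volume a b :=
  (intervalIntegrable_const (c := (1 : ℝ))).mono_fun' (measurable_uk k).aestronglyMeasurable
    (Filter.Eventually.of_forall fun t => by
      simp only [uk, norm_zpow, norm_neg, norm_one, one_zpow, le_refl])

lemma continuous_wk (k : ℕ) : Continuous (wk k) :=
  continuous_primitive (intervalIntegrable_uk k) 0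

section Lamella

variable {k : ℕ} {j : ℕ}

lemma uk_eq_of_mem_Ico (hk : 0 < k) {t : ℝ}
    (ht : t ∈ Set.Ico ((2 * (j : ℝ) - 1) / (2 * k)) ((2 * (j : ℝ) + 1) / (2 * k))) :
    uk k t = (-1) ^ j := by
  have hk' : (0 : ℝ) < 2 * k := by positivity
  obtain ⟨h₁, h₂⟩ := ht
  rw [div_le_iff₀ hk'] at h₁
  rw [lt_div_iff₀ hk'] at h₂
  have hfloor : ⌊(k : ℝ) * t + 1 / 2⌋ = (j : ℤ) := by
    rw [Int.floor_eq_iff]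
    push_cast
    constructor <;> linarith
  rw [uk, hfloor, zpow_natCast]

lemma integral_uk_of_mem (hk : 0 < k) {a b : ℝ}
    (ha : a ∈ Set.Icc ((2 * (j : ℝ) - 1) / (2 * k)) ((2 * (j : ℝ) + 1) / (2 * k)))
    (hb : b ∈ Set.Icc ((2 * (j : ℝ) - 1) / (2 * k)) ((2 * (j : ℝ) + 1) / (2 * k))) :
    ∫ t in a..b, uk k t = (-1) ^ j * (b - a) := by
  have hconst : ∫ t in a..b, uk k t = ∫ _ in a..b, (-1 : ℝ) ^ j := by
    refine integral_congr_ae ?_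
    filter_upwards [volume.ae_ne ((2 * (j : ℝ) + 1) / (2 * k))] with t hne ht
    have ht' := Set.uIcc_subset_Icc ha hb (Set.uIoc_subset_uIcc ht)
    exact uk_eq_of_mem_Ico hk ⟨ht'.1, lt_of_le_of_ne ht'.2 hne⟩
  rw [hconst, intervalIntegral.integral_const, smul_eq_mul, mul_comm]

lemma wk_eq_of_mem (hk : 0 < k) {s : ℝ}
    (hs : s ∈ Set.Icc ((2 * (j : ℝ) - 1) / (2 * k)) ((2 * (j : ℝ) + 1) / (2 * k))) :
    wk k s = (-1) ^ j * (s - j / k) := by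
  have split (a s : ℝ) : wk k s = wk k a + ∫ t in a..s, uk k t :=
    (integral_add_adjacent_intervals (intervalIntegrable_uk k 0 a)
      (intervalIntegrable_uk k a s)).symm
  induction j generalizing s with
  | zero =>
    have h0 : (0 : ℝ) ∈ Set.Icc ((2 * ((0 : ℕ) : ℝ) - 1) / (2 * k))
        ((2 * ((0 : ℕ) : ℝ) + 1) / (2 * k)) :=
      ⟨by rw [div_le_iff₀ (by positivity)]; simp, by positivity⟩
    rw [split 0 s, integral_uk_of_mem hk h0 hs]
    simp [wk]
  | succ j ih =>
    -- the common endpoint `y_{j+1}` of the lamellae `j` and `j + 1`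
    set y : ℝ := (2 * (j : ℝ) + 1) / (2 * k) with hy
    have hy_left : y ∈ Set.Icc ((2 * (j : ℝ) - 1) / (2 * k)) ((2 * (j : ℝ) + 1) / (2 * k)) :=
      ⟨div_le_div_of_nonneg_right (by linarith) (by positivity), le_rfl⟩
    have hy_right : y ∈ Set.Icc ((2 * ((j + 1 : ℕ) : ℝ) - 1) / (2 * k))
        ((2 * ((j + 1 : ℕ) : ℝ) + 1) / (2 * k)) :=
      ⟨le_of_eq (by push_cast; ring),
        div_le_div_of_nonneg_right (by push_cast; linarith) (by positivity)⟩
    rw [split y s, ih hy_left, integral_uk_of_mem hk hy_right hs, hy]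
    field_simp
    push_cast
    ring

lemma integral_wk_eq_zero (hk : 0 < k) :
    ∫ s in ((2 * (j : ℝ) - 1) / (2 * k))..((2 * (j : ℝ) + 1) / (2 * k)), wk k s = 0 := by
  have hle : (2 * (j : ℝ) - 1) / (2 * k) ≤ (2 * (j : ℝ) + 1) / (2 * k) :=
    div_le_div_of_nonneg_right (by linarith) (by positivity)
  rw [integral_congr fun s hs => wk_eq_of_mem hk (Set.uIcc_of_le hle ▸ hs),
    intervalIntegral.integral_const_mul,
    intervalIntegral.integral_sub intervalIntegrable_id intervalIntegrable_const,
    integral_id, intervalIntegral.integral_const, smul_eq_mul]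
  field_simp
  ring

end Lamella

lemma potential_eq_at_succ_jump {k : ℕ} (hk : 0 < k) {v : ℝ → ℝ}
    (hv : ∀ y ∈ Set.Icc (0 : ℝ) 1, HasDerivAt v (- wk k y) y) {j : ℕ} (hj : 1 ≤ j)
    (hjk : j < k) :
    v ((2 * (j : ℝ) - 1) / (2 * k)) = v ((2 * ((j + 1 : ℕ) : ℝ) - 1) / (2 * k)) := by
  have hj' : (1 : ℝ) ≤ j := by exact_mod_cast hj
  have hjk' : (j : ℝ) + 1 ≤ k := by exact_mod_cast hjk
  have hsub : Set.uIcc ((2 * (j : ℝ) - 1) / (2 * k)) ((2 * (j : ℝ) + 1) / (2 * k)) ⊆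
      Set.Icc 0 1 := by
    refine Set.uIcc_subset_Icc ⟨div_nonneg (by linarith) (by positivity), ?_⟩
      ⟨by positivity, ?_⟩ <;>
      rw [div_le_one (by positivity)] <;> linarith
  have ftc := integral_eq_sub_of_hasDerivAt (fun y hy => hv y (hsub hy))
    ((continuous_wk k).neg.intervalIntegrable _ _)
  rw [intervalIntegral.integral_neg, integral_wk_eq_zero hk, neg_zero] at ftc
  push_cast
  rw [show 2 * ((j : ℝ) + 1) - 1 = 2 * j + 1 by ring]
  linarith

lemma Nat.eq_of_forall_eq_succ {α : Type*} {f : ℕ → α} {m n : ℕ}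
    (h : ∀ j, m ≤ j → j < n → f j = f (j + 1)) {i : ℕ} (hmi : m ≤ i) (hin : i ≤ n) :
    f i = f m := by
  induction i, hmi using Nat.le_induction with
  | base => rfl
  | succ i hmi ih => rw [← h i hmi (by omega), ih (by omega)]

/-- `∫_{y_j}^{y_{j+1}} w_k = 0` for `j = 1,…,k−1`; consequently any potential `v_k`
with `v_k' = −w_k` takes the same value at all jump points `y₁,…,y_k` of `u_k`. -/
theorem stmt3 (k : ℕ) (hk : 1 ≤ k) :
    (∀ j : ℕ, 1 ≤ j → j + 1 ≤ k →
      (∫ s in ((2 * (j : ℝ) - 1) / (2 * (k : ℝ)))..((2 * (j : ℝ) + 1) / (2 * (k : ℝ))),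
        wk k s) = 0) ∧
    (∀ v : ℝ → ℝ, (∀ y ∈ Set.Icc (0 : ℝ) 1, HasDerivAt v (- wk k y) y) →
      ∀ i : ℕ, 1 ≤ i → i ≤ k → ∀ j : ℕ, 1 ≤ j → j ≤ k →
        v ((2 * (i : ℝ) - 1) / (2 * (k : ℝ))) = v ((2 * (j : ℝ) - 1) / (2 * (k : ℝ)))) := by
  refine ⟨fun j _ _ => integral_wk_eq_zero hk, fun v hv i hi hik j hj hjk => ?_⟩
  have step (j : ℕ) (hj : 1 ≤ j) (hjk : j < k) := potential_eq_at_succ_jump hk hv hj hjk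
  rw [Nat.eq_of_forall_eq_succ step hi hik, Nat.eq_of_forall_eq_succ step hj hjk]
end

section
/- Let k be a positive integer, let 0 < t₁ < t₂ < … < t_k < 1, let σ ∈ {−1,1}, and let u : (0,1) → {−1,1} be given by u = σ(−1)^j on (t_j, t_{j+1}) for j = 0,…,k, where t₀ = 0 and t_{k+1} = 1 (so u jumps exactly at t₁,…,t_k). Assume ∫₀¹ u = 0, and set w(y) = ∫₀^y u(t) dt. If ∫_{t_j}^{t_{j+1}} w(t) dt = 0 for every j = 1,…,k−1 (i.e. the potential v with v' = −w takes the same value at all jump points), then t_j = (2j−1)/(2k) for every j = 1,…,k; hence u = u_k or u = −u_k, so up to sign there is a unique critical point of the one-dimensional nonlocal isoperimetric problem with exactly k jumps. -/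
/-!
On each interval `(t j, t (j+1))` the primitive `w` is affine with slope `±1`, so the vanishing of
`∫ w` there (the trapezoid rule) says `w (t (j+1)) = -w (t j)`. Starting from `w 0 = 0`, this
forces `|w (t j)| = t 1` at every interior jump point, hence every interior gap equals `2 * t 1`;
`w 1 = 0` makes the last gap `t 1`, so `2 * k * t 1 = 1`.
-/

open MeasureTheory intervalIntegral

open Set

section ConstantOnIoo

variable {u : ℝ → ℝ} {a b c : ℝ}

theorem intervalIntegrable_of_eq_const_on_Ioo (hab : a ≤ b) (hu : ∀ s ∈ Ioo a b, u s = c) :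
    IntervalIntegrable u volume a b := by
  rw [intervalIntegrable_iff_integrableOn_Ioo_of_le hab]
  exact (integrableOn_const measure_Ioo_lt_top.ne).congr_fun (fun s hs => (hu s hs).symm)
    measurableSet_Ioo

theorem integral_eq_of_eq_const_on_Ioo (hab : a ≤ b) (hu : ∀ s ∈ Ioo a b, u s = c) :
    ∫ s in a..b, u s = c * (b - a) := by
  rw [integral_of_le hab, integral_Ioc_eq_integral_Ioo,
    setIntegral_congr_fun measurableSet_Ioo hu]
  simp [hab, mul_comm]

theorem integral_add_mul_sub_of_eq_const_on_Ioo {x₀ : ℝ}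
    (hu : ∀ s ∈ Ioo a b, u s = c) (hint : IntervalIntegrable u volume x₀ a) {y : ℝ}
    (hy : y ∈ Icc a b) : ∫ s in x₀..y, u s = (∫ s in x₀..a, u s) + c * (y - a) := by
  have hu' : ∀ s ∈ Ioo a y, u s = c := fun s hs => hu s ⟨hs.1, hs.2.trans_le hy.2⟩
  rw [← integral_add_adjacent_intervals hint (intervalIntegrable_of_eq_const_on_Ioo hy.1 hu'),
    integral_eq_of_eq_const_on_Ioo hy.1 hu']

end ConstantOnIoo

theorem integral_eq_trapezoid_of_affine {w : ℝ → ℝ} {a b m : ℝ} (hab : a ≤ b)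
    (hw : ∀ y ∈ Icc a b, w y = w a + m * (y - a)) :
    ∫ y in a..b, w y = (w a + w b) * (b - a) / 2 := by
  have hcont : Continuous fun y : ℝ => m * (y - a) := by fun_prop
  rw [integral_congr (fun y hy => hw y (uIcc_of_le hab ▸ hy)), hw b (right_mem_Icc.2 hab),
    integral_add intervalIntegrable_const (hcont.intervalIntegrable _ _),
    intervalIntegral.integral_const_mul, integral_comp_sub_right (fun y => y)]
  simp only [intervalIntegral.integral_const, smul_eq_mul, sub_self, integral_id, ne_eq,
    OfNat.ofNat_ne_zero, not_false_eq_true, zero_pow, sub_zero]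
  ring

theorem exists_mem_Ioo_of_notMem_range {α : Type*} [LinearOrder α] {t : ℕ → α} {n : ℕ} {s : α}
    (hs : s ∈ Ioo (t 0) (t n)) (hst : s ∉ range t) : ∃ j < n, s ∈ Ioo (t j) (t (j + 1)) := by
  classical
  have hex : ∃ i, s < t i := ⟨n, hs.2⟩
  obtain ⟨j, hj⟩ : ∃ j, Nat.find hex = j + 1 :=
    Nat.exists_eq_succ_of_ne_zero fun h => hs.1.not_gt (h ▸ Nat.find_spec hex)
  have hjn : j + 1 ≤ n := hj ▸ Nat.find_min' hex hs.2
  have htj : t j ≤ s := not_lt.1 (Nat.find_min hex (by omega))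
  exact ⟨j, hjn, htj.lt_of_ne fun h => hst ⟨j, h⟩, hj ▸ Nat.find_spec hex⟩

theorem sq_mul_neg_one_pow {σ : ℝ} (hσ : σ ^ 2 = 1) (j : ℕ) : (σ * (-1) ^ j) ^ 2 = 1 := by
  rw [mul_pow, hσ, one_mul, ← pow_mul, pow_mul', neg_one_sq, one_pow]

section JumpPoints

variable {k : ℕ} {t W : ℕ → ℝ} {σ : ℝ}

theorem primitive_at_jumpPoints (hσ : σ ^ 2 = 1) (ht0 : t 0 = 0) (hW0 : W 0 = 0)
    (hstep : ∀ j ≤ k, W (j + 1) = W j + σ * (-1) ^ j * (t (j + 1) - t j))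
    (hbal : ∀ j, 1 ≤ j → j < k → W j + W (j + 1) = 0) :
    ∀ j, 1 ≤ j → j ≤ k → W j = -(σ * (-1) ^ j * t 1) ∧ t j = (2 * j - 1) * t 1 := by
  intro j hj1 hjk
  induction j, hj1 using Nat.le_induction with
  | base =>
    have h : W 1 = W 0 + σ * (-1) ^ 0 * (t 1 - t 0) := hstep 0 (by omega)
    rw [hW0, ht0] at h
    exact ⟨by linear_combination h, by norm_num⟩
  | succ m hm ih =>
    obtain ⟨hWm, htm⟩ := ih (by omega)
    have hWm1 : W (m + 1) = -(σ * (-1) ^ (m + 1) * t 1) := by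
      linear_combination hbal m hm (by omega) - hWm
    refine ⟨hWm1, ?_⟩
    have h := hstep m (by omega)
    rw [hWm, hWm1] at h
    push_cast
    linear_combination (-(σ * (-1) ^ m)) * h + htm +
      (2 * t 1 - (t (m + 1) - t m)) * sq_mul_neg_one_pow hσ m

theorem jumpPoints_eq_of_balanced (hk : 1 ≤ k) (hσ : σ ^ 2 = 1) (ht0 : t 0 = 0)
    (htlast : t (k + 1) = 1) (hW0 : W 0 = 0) (hWlast : W (k + 1) = 0)
    (hstep : ∀ j ≤ k, W (j + 1) = W j + σ * (-1) ^ j * (t (j + 1) - t j))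
    (hbal : ∀ j, 1 ≤ j → j < k → W j + W (j + 1) = 0) :
    ∀ j, 1 ≤ j → j ≤ k → t j = (2 * (j : ℝ) - 1) / (2 * (k : ℝ)) := by
  have hvals := primitive_at_jumpPoints hσ ht0 hW0 hstep hbal
  obtain ⟨hWk, htk⟩ := hvals k hk le_rfl
  have hlast := hstep k le_rfl
  rw [hWk, hWlast, htlast] at hlast
  have ht1 : 2 * (k : ℝ) * t 1 = 1 := by
    linear_combination (σ * (-1) ^ k) * hlast - htk - (t 1 - 1 + t k) * sq_mul_neg_one_pow hσ k
  intro j hj1 hjk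
  rw [(hvals j hj1 hjk).2, eq_div_iff (by positivity)]
  linear_combination (2 * (j : ℝ) - 1) * ht1

end JumpPoints

theorem uk_eq_of_mem_Ioo {k : ℕ} (hk : 1 ≤ k) {t : ℕ → ℝ} (ht0 : t 0 = 0) (htlast : t (k + 1) = 1)
    (ht : ∀ j, 1 ≤ j → j ≤ k → t j = (2 * (j : ℝ) - 1) / (2 * (k : ℝ))) {j : ℕ} (hj : j ≤ k)
    {s : ℝ} (hs : s ∈ Ioo (t j) (t (j + 1))) : uk k s = (-1) ^ j := by
  have hk0 : (0 : ℝ) < 2 * k := by positivity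
  have hlow : (2 * (j : ℝ) - 1) / (2 * k) ≤ t j := by
    rcases Nat.eq_zero_or_pos j with rfl | hj0
    · rw [ht0]; exact div_nonpos_of_nonpos_of_nonneg (by norm_num) hk0.le
    · exact (ht j hj0 hj).ge
  have hup : t (j + 1) ≤ (2 * (j : ℝ) + 1) / (2 * k) := by
    rcases hj.eq_or_lt with rfl | hjk
    · rw [htlast, le_div_iff₀ hk0]; linarith
    · exact (ht (j + 1) (by omega) hjk).le.trans_eq (by push_cast; ring)
  have h1 := hlow.trans_lt hs.1
  have h2 := hs.2.trans_le hup
  rw [div_lt_iff₀ hk0] at h1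
  rw [lt_div_iff₀ hk0] at h2
  have hfloor : ⌊(k : ℝ) * s + 1 / 2⌋ = j := by
    rw [Int.floor_eq_iff]; push_cast; constructor <;> linarith
  rw [uk, hfloor, zpow_natCast]

/-- Uniqueness (up to sign) of the `k`-jump critical point: if `u = σ(−1)^j` on
`(t_j, t_{j+1})`, has mean zero, and its primitive `w` integrates to zero between
consecutive jump points, then `t_j = (2j−1)/(2k)` for all `j`, hence `u = σ u_k` a.e. -/
theorem stmt4 (k : ℕ) (hk : 1 ≤ k) (t : ℕ → ℝ) (σ : ℝ) (hσ : σ = 1 ∨ σ = -1)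
    (ht0 : t 0 = 0) (htlast : t (k + 1) = 1)
    (htmono : ∀ i, i ≤ k → t i < t (i + 1))
    (u : ℝ → ℝ)
    (hu : ∀ j, j ≤ k → ∀ s ∈ Set.Ioo (t j) (t (j + 1)), u s = σ * (-1 : ℝ) ^ j)
    (hmean : ∫ s in (0 : ℝ)..1, u s = 0)
    (w : ℝ → ℝ) (hw : ∀ y, w y = ∫ s in (0 : ℝ)..y, u s)
    (hcrit : ∀ j, 1 ≤ j → j + 1 ≤ k → (∫ s in (t j)..(t (j + 1)), w s) = 0) :
    (∀ j, 1 ≤ j → j ≤ k → t j = (2 * (j : ℝ) - 1) / (2 * (k : ℝ))) ∧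
    (∀ᵐ s ∂(volume.restrict (Set.Ioo (0 : ℝ) 1)), u s = σ * uk k s) := by
  have hσ2 : σ ^ 2 = 1 := by rcases hσ with rfl | rfl <;> norm_num
  have hint : ∀ j ≤ k + 1, IntervalIntegrable u volume 0 (t j) := fun j _ =>
    ht0 ▸ IntervalIntegrable.trans_iterate fun i hi =>
      intervalIntegrable_of_eq_const_on_Ioo (htmono i (by omega)).le (hu i (by omega))
  have haffine : ∀ j ≤ k, ∀ y ∈ Icc (t j) (t (j + 1)),
      w y = w (t j) + σ * (-1) ^ j * (y - t j) := fun j hj y hy => by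
    simp only [hw]
    exact integral_add_mul_sub_of_eq_const_on_Ioo (hu j hj) (hint j (by omega)) hy
  have hstep : ∀ j ≤ k, w (t (j + 1)) = w (t j) + σ * (-1) ^ j * (t (j + 1) - t j) :=
    fun j hj => haffine j hj _ (right_mem_Icc.2 (htmono j hj).le)
  have hbal : ∀ j, 1 ≤ j → j < k → w (t j) + w (t (j + 1)) = 0 := by
    intro j hj hjk
    have h := hcrit j hj hjk
    rw [integral_eq_trapezoid_of_affine (htmono j hjk.le).le (haffine j hjk.le)] at h
    have hgap : t (j + 1) - t j ≠ 0 := (sub_pos.2 (htmono j hjk.le)).ne'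
    simpa [hgap] using h
  have hpts := jumpPoints_eq_of_balanced hk hσ2 ht0 htlast (by rw [hw, ht0, integral_same])
    (by rw [hw, htlast, hmean]) hstep hbal
  refine ⟨hpts, ?_⟩
  have hnull : ∀ᵐ s, s ∉ range t :=
    measure_eq_zero_iff_ae_notMem.1 ((countable_range t).measure_zero _)
  filter_upwards [ae_restrict_of_ae hnull, ae_restrict_mem measurableSet_Ioo] with s hst hs
  obtain ⟨j, hj, hsj⟩ := exists_mem_Ioo_of_notMem_range (ht0 ▸ htlast ▸ hs) hst
  rw [hu j (by omega) s hsj, uk_eq_of_mem_Ioo hk ht0 htlast hpts (by omega) hsj]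
end
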